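/- Let l be a positive integer and τ' ∈ [0,1], and set τ₁ = ⌊(2^l/π)·arcsin(√τ')⌋. Then τ' - 2π/2^l ≤ sin²(π·τ₁/2^l). -/

import Mathlib

theorem tau_floor_bound (l : ℕ) (hl : 1 ≤ l) (τ' : ℝ) (hτ : τ' ∈ Set.Icc (0:ℝ) 1)
    (τ₁ : ℤ) (hτ₁ : τ₁ = ⌊(2 ^ l / Real.pi) * Real.arcsin (Real.sqrt τ')⌋) :
    τ' - 2 * Real.pi / 2 ^ l ≤ Real.sin (Real.pi * τ₁ / 2 ^ l) ^ 2 := by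
  obtain ⟨hτ0, hτ1⟩ := hτ
  have hπ : (0:ℝ) < Real.pi := Real.pi_pos
  have h2l : (0:ℝ) < 2 ^ l := by positivity
  set θ := Real.arcsin (Real.sqrt τ') with hθdef
  have hθ0 : 0 ≤ θ := Real.arcsin_nonneg.2 (Real.sqrt_nonneg _)
  have hθ2 : θ ≤ Real.pi / 2 := Real.arcsin_le_pi_div_two _
  have hsin : Real.sin θ = Real.sqrt τ' :=
    Real.sin_arcsin (by linarith [Real.sqrt_nonneg τ']) (by rw [show (1:ℝ) = Real.sqrt 1 from (Real.sqrt_one).symm]; exact Real.sqrt_le_sqrt hτ1)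
  have hsq : Real.sin θ ^ 2 = τ' := by
    rw [hsin, Real.sq_sqrt hτ0]
  have hτ₁0 : (0:ℝ) ≤ (τ₁:ℝ) := by
    have : (0:ℤ) ≤ τ₁ := by
      rw [hτ₁]
      exact Int.floor_nonneg.2 (by positivity)
    exact_mod_cast this
  set φ := Real.pi * τ₁ / 2 ^ l with hφdef
  have hφ0 : 0 ≤ φ := by positivity
  have hfl : (τ₁:ℝ) ≤ 2 ^ l / Real.pi * θ := by
    rw [hτ₁]; exact Int.floor_le _
  have hfl' : 2 ^ l / Real.pi * θ < τ₁ + 1 := by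
    rw [hτ₁]; exact Int.lt_floor_add_one _
  have hkey : Real.pi * (2 ^ l / Real.pi * θ) = θ * 2 ^ l := by
    field_simp
  have hφθ : φ ≤ θ := by
    rw [hφdef, div_le_iff₀ h2l]
    have h := mul_le_mul_of_nonneg_left hfl (le_of_lt hπ)
    rw [hkey] at h
    exact h
  have hgap : θ - φ ≤ Real.pi / 2 ^ l := by
    have h := mul_lt_mul_of_pos_left hfl' hπ
    rw [hkey] at h
    rw [hφdef, sub_le_iff_le_add, ← add_div, le_div_iff₀ h2l]
    nlinarith
  have hφ2 : φ ≤ Real.pi / 2 := le_trans hφθ hθ2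
  have hmono : Real.sin φ ≤ Real.sin θ := by
    apply Real.strictMonoOn_sin.monotoneOn ?_ ?_ hφθ
    · constructor <;> [linarith; linarith]
    · constructor <;> [linarith; linarith]
  have hlip : Real.sin θ - Real.sin φ ≤ θ - φ := by
    rw [Real.sin_sub_sin]
    have ha0 : 0 ≤ (θ - φ) / 2 := by linarith
    have hs0 : 0 ≤ Real.sin ((θ - φ) / 2) :=
      Real.sin_nonneg_of_nonneg_of_le_pi ha0 (by nlinarith [Real.pi_pos])
    have hsle : Real.sin ((θ - φ) / 2) ≤ (θ - φ) / 2 := Real.sin_le ha0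
    have hc1 : Real.cos ((θ + φ) / 2) ≤ 1 := Real.cos_le_one _
    nlinarith
  have hsφ0 : 0 ≤ Real.sin φ := Real.sin_nonneg_of_nonneg_of_le_pi hφ0 (by linarith)
  have hsθ1 : Real.sin θ ≤ 1 := Real.sin_le_one θ
  have hsφ1 : Real.sin φ ≤ 1 := Real.sin_le_one φ
  have h1 : (Real.sin θ - Real.sin φ) * (Real.sin θ + Real.sin φ) ≤ (θ - φ) * 2 :=
    mul_le_mul hlip (by linarith) (by linarith) (by linarith)
  have h2 : 2 * Real.pi / 2 ^ l = 2 * (Real.pi / 2 ^ l) := by ring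
  nlinarith [h1, hsq, hgap]
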